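/- Let d ≥ 1 and let s ≥ s₀ > d/2 be real numbers. There exists a constant C ≥ 1, depending only on d, s and s₀, such that for all integers m ≥ 3 and 1 ≤ n ≤ m−1, every real N ≥ 1, and all functions f, g : ℤ^d → [0,∞) with f(a) = 0 whenever ⟨a⟩ > N, g(a) = 0 whenever ⟨a⟩ ≤ N, ‖f‖_s < ∞ and ‖g‖_{s₀} < ∞, the function F = f^{⋆(m−1−n)} ⋆ g^{⋆n} satisfies (Σ_{ℓ∈ℤ^d, ⟨ℓ⟩≤N} ⟨ℓ⟩^{2s} F(ℓ)²)^{1/2} ≤ C^{m} N^{n(s−s₀)} ‖f‖_s^{m−1−n} ‖g‖_{s₀}^{n}. (Mixed-norm estimate on the low-frequency part of a polynomial vector field containing n high modes.) -/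

import Mathlib

/-- Japanese bracket `⟨a⟩ = (1+|a|²)^{1/2}` for `a ∈ ℤ^d`. -/
noncomputable def jap {d : ℕ} (a : Fin d → ℤ) : ℝ :=
  Real.sqrt (1 + ∑ i, ((a i : ℝ)) ^ 2)

/-- Convolution of two functions on `ℤ^d`. -/
noncomputable def conv {d : ℕ} (f g : (Fin d → ℤ) → ℝ) : (Fin d → ℤ) → ℝ :=
  fun a => ∑' b : Fin d → ℤ, f b * g (a - b)

/-- Iterated convolution `f^{⋆k}`, with `f^{⋆0}` the indicator of `{0}`. -/
noncomputable def convIter {d : ℕ} (f : (Fin d → ℤ) → ℝ) : ℕ → (Fin d → ℤ) → ℝ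
  | 0 => fun a => if a = 0 then 1 else 0
  | k + 1 => conv (convIter f k) f

/-- Weighted `ℓ²_s` norm of a real-valued sequence on `ℤ^d`. -/
noncomputable def wnormR {d : ℕ} (s : ℝ) (f : (Fin d → ℤ) → ℝ) : ℝ :=
  Real.sqrt (∑' a : Fin d → ℤ, jap a ^ (2 * s) * (f a) ^ 2)

/-!
For `s₀ > d/2` the weighted space `ℓ²_{s₀}(ℤ^d)` is a convolution algebra. The weight splits over
the two factors, `⟨a⟩^{s₀} ≤ 2^{s₀} (⟨b⟩^{s₀} + ⟨a-b⟩^{s₀})`, and each of the two resulting terms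
is bounded by Young's inequality `‖u ⋆ v‖_{ℓ²} ≤ ‖u‖_{ℓ²} ‖v‖_{ℓ¹}` followed by Cauchy–Schwarz
`‖v‖_{ℓ¹}² ≤ (∑ ⟨a⟩^{-2s₀}) ‖v‖_{s₀}²`, the last sum being finite because `2 s₀ > d`. Iterating
gives `‖F‖_{s₀} ≤ C^m ‖f‖_{s₀}^{m-1-n} ‖g‖_{s₀}^n`, and on `⟨ℓ⟩ ≤ N` the weight `⟨ℓ⟩^s` is at most
`N^{s-s₀} ⟨ℓ⟩^{s₀} ≤ N^{n(s-s₀)} ⟨ℓ⟩^{s₀}`.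

All sums are taken in `ℝ≥0∞`, where every series converges, so no summability has to be tracked;
the real quantities of the statement are compared with their `ℝ≥0∞` counterparts only at the end.
-/

open scoped ENNReal

namespace ENNReal

theorem tsum_mul_sq_le {ι : Type*} (x y : ι → ℝ≥0∞) :
    (∑' i, x i * y i) ^ 2 ≤ (∑' i, x i ^ 2) * ∑' i, y i ^ 2 := by
  let _ : MeasurableSpace ι := ⊤
  have hHolder := lintegral_mul_le_Lp_mul_Lq MeasureTheory.Measure.count
    Real.HolderConjugate.two_two measurable_from_top.aemeasurable
    measurable_from_top.aemeasurable (f := x) (g := y)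
  simp only [MeasureTheory.lintegral_count, Pi.mul_apply, rpow_two] at hHolder
  calc (∑' i, x i * y i) ^ 2
      ≤ ((∑' i, x i ^ 2) ^ (1 / 2 : ℝ) * (∑' i, y i ^ 2) ^ (1 / 2 : ℝ)) ^ 2 := by gcongr
    _ = (∑' i, x i ^ 2) * ∑' i, y i ^ 2 := by
      rw [mul_pow, ← rpow_natCast, ← rpow_natCast, ← rpow_mul, ← rpow_mul]
      norm_num

theorem add_sq_le_two_mul (x y : ℝ≥0∞) : (x + y) ^ 2 ≤ 2 * (x ^ 2 + y ^ 2) := by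
  have h := rpow_add_le_mul_rpow_add_rpow x y one_le_two
  norm_num [rpow_two] at h
  exact h

theorem ofReal_tsum_le {ι : Type*} {x : ι → ℝ} (hx : ∀ i, 0 ≤ x i) :
    ENNReal.ofReal (∑' i, x i) ≤ ∑' i, ENNReal.ofReal (x i) := by
  by_cases hs : Summable x
  · exact (ENNReal.ofReal_tsum_of_nonneg hx hs).le
  · simp [tsum_eq_zero_of_not_summable hs]

end ENNReal

section Convolution

variable {G : Type*} [AddCommGroup G]

noncomputable def econv (u v : G → ℝ≥0∞) (a : G) : ℝ≥0∞ :=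
  ∑' b, u b * v (a - b)

noncomputable def econvIter [DecidableEq G] (u : G → ℝ≥0∞) : ℕ → G → ℝ≥0∞
  | 0 => fun a => if a = 0 then 1 else 0
  | k + 1 => econv (econvIter u k) u

theorem tsum_comp_sub_left {M : Type*} [AddCommMonoid M] [TopologicalSpace M] (v : G → M)
    (a : G) : ∑' b, v (a - b) = ∑' b, v b :=
  (Equiv.subLeft a).tsum_eq v

theorem tsum_comp_sub_right {M : Type*} [AddCommMonoid M] [TopologicalSpace M] (v : G → M)
    (b : G) : ∑' a, v (a - b) = ∑' a, v a :=
  (Equiv.subRight b).tsum_eq v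

theorem econv_comm (u v : G → ℝ≥0∞) : econv u v = econv v u := by
  funext a
  rw [econv, econv, ← tsum_comp_sub_left _ a]
  simp [mul_comm]

theorem econv_mono {u u' v v' : G → ℝ≥0∞} (hu : u ≤ u') (hv : v ≤ v') :
    econv u v ≤ econv u' v' :=
  fun _ => ENNReal.tsum_le_tsum fun b => mul_le_mul' (hu b) (hv _)

theorem tsum_econv_sq_le (u v : G → ℝ≥0∞) :
    ∑' a, econv u v a ^ 2 ≤ (∑' b, u b ^ 2) * (∑' b, v b) ^ 2 := by
  have sqrt_sq (z : ℝ≥0∞) : (z ^ (1 / 2 : ℝ)) ^ 2 = z := by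
    rw [← ENNReal.rpow_natCast, ← ENNReal.rpow_mul]; norm_num
  -- Cauchy–Schwarz for `u b √v(a-b)` against `√v(a-b)`
  have pointwise (a : G) :
      econv u v a ^ 2 ≤ (∑' b, u b ^ 2 * v (a - b)) * ∑' b, v b := by
    have := ENNReal.tsum_mul_sq_le (fun b => u b * v (a - b) ^ (1 / 2 : ℝ))
      (fun b => v (a - b) ^ (1 / 2 : ℝ))
    simpa only [econv, mul_assoc, ← sq, mul_pow, sqrt_sq, tsum_comp_sub_left v a] using this
  calc ∑' a, econv u v a ^ 2 ≤ ∑' a, (∑' b, u b ^ 2 * v (a - b)) * ∑' b, v b :=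
        ENNReal.tsum_le_tsum pointwise
    _ = (∑' b, u b ^ 2 * ∑' a, v (a - b)) * ∑' b, v b := by
        rw [ENNReal.tsum_mul_right, ENNReal.tsum_comm]
        simp only [ENNReal.tsum_mul_left]
    _ = (∑' b, u b ^ 2) * (∑' b, v b) ^ 2 := by
        simp only [tsum_comp_sub_right, ENNReal.tsum_mul_right]; ring

end Convolution

section JapaneseBracket

variable {d : ℕ}

theorem jap_sq (a : Fin d → ℤ) : jap a ^ 2 = 1 + ∑ i, (a i : ℝ) ^ 2 :=
  Real.sq_sqrt (by positivity)

theorem one_le_jap (a : Fin d → ℤ) : 1 ≤ jap a :=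
  Real.one_le_sqrt.2 (le_add_of_nonneg_right (by positivity))

theorem jap_pos (a : Fin d → ℤ) : 0 < jap a := one_pos.trans_le (one_le_jap a)

theorem jap_zero : jap (0 : Fin d → ℤ) = 1 := by simp [jap]

theorem jap_add_le_two_mul_max (a b : Fin d → ℤ) :
    jap (a + b) ≤ 2 * max (jap a) (jap b) := by
  have hsq : jap (a + b) ^ 2 ≤ 2 * (jap a ^ 2 + jap b ^ 2) := by
    simp only [jap_sq, Pi.add_apply, Int.cast_add]
    calc 1 + ∑ i, ((a i : ℝ) + b i) ^ 2
        ≤ 1 + ∑ i, 2 * ((a i : ℝ) ^ 2 + (b i : ℝ) ^ 2) := by gcongr with i; exact add_sq_le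
      _ ≤ _ := by rw [← Finset.mul_sum, Finset.sum_add_distrib]; linarith
  refine (pow_le_pow_iff_left₀ (jap_pos _).le (by positivity [jap_pos a]) two_ne_zero).1
    (hsq.trans ?_)
  nlinarith [le_max_left (jap a) (jap b), le_max_right (jap a) (jap b), jap_pos a, jap_pos b]

theorem jap_add_rpow_le {σ : ℝ} (hσ : 0 ≤ σ) (a b : Fin d → ℤ) :
    jap (a + b) ^ σ ≤ 2 ^ σ * (jap a ^ σ + jap b ^ σ) := by
  have hmax : max (jap a) (jap b) ^ σ ≤ jap a ^ σ + jap b ^ σ := by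
    rcases max_cases (jap a) (jap b) with ⟨h, -⟩ | ⟨h, -⟩ <;> rw [h]
    · exact le_add_of_nonneg_right (Real.rpow_nonneg (jap_pos b).le σ)
    · exact le_add_of_nonneg_left (Real.rpow_nonneg (jap_pos a).le σ)
  calc jap (a + b) ^ σ ≤ (2 * max (jap a) (jap b)) ^ σ :=
        Real.rpow_le_rpow (jap_pos _).le (jap_add_le_two_mul_max a b) hσ
    _ = 2 ^ σ * max (jap a) (jap b) ^ σ :=
        Real.mul_rpow zero_le_two ((jap_pos a).le.trans (le_max_left _ _))
    _ ≤ 2 ^ σ * (jap a ^ σ + jap b ^ σ) := by gcongr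

theorem summable_one_add_sq_rpow_neg {τ : ℝ} (hτ : 1 / 2 < τ) :
    Summable fun k : ℤ => (1 + (k : ℝ) ^ 2) ^ (-τ) := by
  refine (Real.summable_abs_int_rpow (b := 2 * τ) (by linarith)).of_norm_bounded_eventually ?_
  filter_upwards [Filter.eventually_cofinite_ne 0] with k hk
  have hk : 0 < (k : ℝ) ^ 2 := by positivity
  calc ‖(1 + (k : ℝ) ^ 2) ^ (-τ)‖ = (1 + (k : ℝ) ^ 2) ^ (-τ) :=
        Real.norm_of_nonneg (by positivity)
    _ ≤ ((k : ℝ) ^ 2) ^ (-τ) := Real.rpow_le_rpow_of_nonpos hk (by linarith) (by linarith)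
    _ = |(k : ℝ)| ^ (-(2 * τ)) := by
      rw [← sq_abs, ← Real.rpow_natCast, ← Real.rpow_mul (abs_nonneg _)]; push_cast; ring_nf

theorem summable_fin_prod_apply {α : Type*} {g : α → ℝ} (hg₀ : 0 ≤ g) (hg : Summable g) :
    ∀ d : ℕ, Summable fun a : Fin d → α => ∏ i, g (a i)
  | 0 => .of_finite
  | d + 1 => by
    have hprod := hg.mul_of_nonneg (summable_fin_prod_apply hg₀ hg d) hg₀
      fun a => Finset.prod_nonneg fun i _ => hg₀ (a i)
    refine ((Fin.consEquiv fun _ => α).symm.summable_iff.2 hprod).congr fun a => ?_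
    simp [Fin.prod_univ_succ, Fin.tail]

theorem summable_jap_rpow_neg {σ : ℝ} (hσ : (d : ℝ) / 2 < σ) :
    Summable fun a : Fin d → ℤ => jap a ^ (-(2 * σ)) := by
  rcases Nat.eq_zero_or_pos d with rfl | hd
  · exact .of_finite
  have hd' : (0 : ℝ) < d := Nat.cast_pos.2 hd
  have hτ : 1 / 2 < σ / d := by rw [lt_div_iff₀ hd']; linarith
  -- `⟨a⟩^{2d} ≥ ∏ᵢ (1 + aᵢ²)` reduces the sum to a product of one-dimensional ones
  refine (summable_fin_prod_apply (fun k => by positivity) (summable_one_add_sq_rpow_neg hτ)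
    d).of_nonneg_of_le (fun a => Real.rpow_nonneg (jap_pos a).le _) fun a => ?_
  have hprod : ∏ i, (1 + (a i : ℝ) ^ 2) ≤ jap a ^ (2 * d) := by
    rw [pow_mul, jap_sq]
    calc ∏ i, (1 + (a i : ℝ) ^ 2) ≤ ∏ _i : Fin d, (1 + ∑ j, (a j : ℝ) ^ 2) := by
          gcongr with i
          exact Finset.single_le_sum (fun j _ => sq_nonneg (a j : ℝ)) (Finset.mem_univ i)
      _ = (1 + ∑ j, (a j : ℝ) ^ 2) ^ d := by simp
  calc jap a ^ (-(2 * σ)) = (jap a ^ (2 * d)) ^ (-(σ / d)) := by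
        rw [← Real.rpow_natCast, ← Real.rpow_mul (jap_pos a).le]; push_cast; field_simp
    _ ≤ (∏ i, (1 + (a i : ℝ) ^ 2)) ^ (-(σ / d)) :=
        Real.rpow_le_rpow_of_nonpos (by positivity) hprod (neg_nonpos.2 (by positivity))
    _ = ∏ i, (1 + (a i : ℝ) ^ 2) ^ (-(σ / d)) :=
        (Real.finsetProd_rpow _ _ (fun i _ => by positivity) _).symm

end JapaneseBracket

section WeightedNorm

variable {d : ℕ}

noncomputable def japPow (σ : ℝ) (a : Fin d → ℤ) : ℝ≥0∞ :=
  ENNReal.ofReal (jap a ^ σ)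

noncomputable def wnormSq (σ : ℝ) (u : (Fin d → ℤ) → ℝ≥0∞) : ℝ≥0∞ :=
  ∑' a, (japPow σ a * u a) ^ 2

theorem japPow_neg_mul_japPow (σ : ℝ) (a : Fin d → ℤ) :
    japPow (-σ) a * japPow σ a = 1 := by
  rw [japPow, japPow, ← ENNReal.ofReal_mul (by positivity [jap_pos a]),
    ← Real.rpow_add (jap_pos a)]
  simp

theorem japPow_mono_left {σ σ' : ℝ} (hσ : σ ≤ σ') (a : Fin d → ℤ) :
    japPow σ a ≤ japPow σ' a :=
  ENNReal.ofReal_le_ofReal (Real.rpow_le_rpow_of_exponent_le (one_le_jap a) hσ)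

theorem japPow_le_add_sub {σ : ℝ} (hσ : 0 ≤ σ) (a b : Fin d → ℤ) :
    japPow σ a ≤ ENNReal.ofReal (2 ^ σ) * (japPow σ b + japPow σ (a - b)) := by
  rw [japPow, japPow, japPow, ← ENNReal.ofReal_add (by positivity [jap_pos b])
    (by positivity [jap_pos (a - b)]), ← ENNReal.ofReal_mul (by positivity)]
  simpa using ENNReal.ofReal_le_ofReal (jap_add_rpow_le hσ b (a - b))

theorem wnormSq_mono_left {σ σ' : ℝ} (hσ : σ ≤ σ') (u : (Fin d → ℤ) → ℝ≥0∞) :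
    wnormSq σ u ≤ wnormSq σ' u :=
  ENNReal.tsum_le_tsum fun a => by gcongr; exact japPow_mono_left hσ a

theorem wnormSq_mono_right (σ : ℝ) {u v : (Fin d → ℤ) → ℝ≥0∞} (huv : u ≤ v) :
    wnormSq σ u ≤ wnormSq σ v :=
  ENNReal.tsum_le_tsum fun a => by gcongr; exact huv a

theorem wnormSq_econvIter_zero (σ : ℝ) (u : (Fin d → ℤ) → ℝ≥0∞) :
    wnormSq σ (econvIter u 0) = 1 := by
  rw [wnormSq, tsum_eq_single 0 fun a ha => by simp [econvIter, ha]]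
  simp [econvIter, japPow, jap_zero]

theorem sq_tsum_le_mul_wnormSq (σ : ℝ) (u : (Fin d → ℤ) → ℝ≥0∞) :
    (∑' a, u a) ^ 2 ≤ (∑' a : Fin d → ℤ, japPow (-σ) a ^ 2) * wnormSq σ u := by
  simpa only [wnormSq, ← mul_assoc, japPow_neg_mul_japPow, one_mul] using
    ENNReal.tsum_mul_sq_le (fun a => japPow (-σ) a) fun a => japPow σ a * u a

theorem wnormSq_econv_le {σ : ℝ} (hσ : 0 ≤ σ) (u v : (Fin d → ℤ) → ℝ≥0∞) :
    wnormSq σ (econv u v) ≤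
      4 * ENNReal.ofReal (2 ^ σ) ^ 2 * (∑' a : Fin d → ℤ, japPow (-σ) a ^ 2) *
        wnormSq σ u * wnormSq σ v := by
  set c := ENNReal.ofReal (2 ^ σ)
  set K := ∑' a : Fin d → ℤ, japPow (-σ) a ^ 2
  set A := econv (fun b => japPow σ b * u b) v with hA
  set B := econv (fun b => japPow σ b * v b) u with hB
  have split (a : Fin d → ℤ) : japPow σ a * econv u v a ≤ c * (A a + B a) := by
    calc japPow σ a * econv u v a
        ≤ ∑' b, c * (japPow σ b + japPow σ (a - b)) * (u b * v (a - b)) := by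
          rw [econv, ← ENNReal.tsum_mul_left]
          exact ENNReal.tsum_le_tsum fun b => by gcongr; exact japPow_le_add_sub hσ a b
      _ = c * (A a + B a) := by
          rw [hA, hB, econv_comm (fun b => japPow σ b * v b), econv, econv,
            ← ENNReal.tsum_add, ← ENNReal.tsum_mul_left]
          congr 1 with b
          ring
  calc wnormSq σ (econv u v) ≤ ∑' a, c ^ 2 * (2 * (A a ^ 2 + B a ^ 2)) :=
        ENNReal.tsum_le_tsum fun a => by
          grw [split a, mul_pow, ENNReal.add_sq_le_two_mul]
    _ = 2 * c ^ 2 * (∑' a, A a ^ 2 + ∑' a, B a ^ 2) := by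
        rw [← ENNReal.tsum_add, ← ENNReal.tsum_mul_left]
        congr 1 with a
        ring
    _ ≤ 2 * c ^ 2 * (wnormSq σ u * (K * wnormSq σ v) + wnormSq σ v * (K * wnormSq σ u)) := by
        gcongr
        · exact (tsum_econv_sq_le _ _).trans (mul_le_mul' le_rfl (sq_tsum_le_mul_wnormSq σ v))
        · exact (tsum_econv_sq_le _ _).trans (mul_le_mul' le_rfl (sq_tsum_le_mul_wnormSq σ u))
    _ = 4 * c ^ 2 * K * wnormSq σ u * wnormSq σ v := by ring

theorem tsum_japPow_neg_sq_ne_top {σ : ℝ} (hσ : (d : ℝ) / 2 < σ) :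
    ∑' a : Fin d → ℤ, japPow (-σ) a ^ 2 ≠ ∞ := by
  have hsq (a : Fin d → ℤ) : japPow (-σ) a ^ 2 = ENNReal.ofReal (jap a ^ (-(2 * σ))) := by
    rw [japPow, ← ENNReal.ofReal_pow (by positivity [jap_pos a]),
      ← Real.rpow_mul_natCast (jap_pos a).le]
    ring_nf
  simp_rw [hsq, ← ENNReal.ofReal_tsum_of_nonneg (fun a => by positivity [jap_pos a])
    (summable_jap_rpow_neg hσ)]
  exact ENNReal.ofReal_ne_top

theorem exists_wnormSq_econv_le {σ : ℝ} (hσ : (d : ℝ) / 2 < σ) :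
    ∃ C : ℝ, 1 ≤ C ∧ ∀ u v : (Fin d → ℤ) → ℝ≥0∞,
      wnormSq σ (econv u v) ≤ ENNReal.ofReal (C ^ 2) * wnormSq σ u * wnormSq σ v := by
  set D := 4 * ENNReal.ofReal (2 ^ σ) ^ 2 * ∑' a : Fin d → ℤ, japPow (-σ) a ^ 2
  have hD : D ≠ ∞ := ENNReal.mul_ne_top (by finiteness) (tsum_japPow_neg_sq_ne_top hσ)
  refine ⟨D.toReal + 1, le_add_of_nonneg_left ENNReal.toReal_nonneg, fun u v => ?_⟩
  refine (wnormSq_econv_le ((by positivity : (0 : ℝ) ≤ d / 2).trans hσ.le) u v).trans ?_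
  gcongr
  exact (ENNReal.le_ofReal_iff_toReal_le hD (by positivity)).2
    (by nlinarith [ENNReal.toReal_nonneg (a := D)])

theorem wnormSq_econvIter_le {σ : ℝ} {D : ℝ≥0∞}
    (hD : ∀ u v : (Fin d → ℤ) → ℝ≥0∞,
      wnormSq σ (econv u v) ≤ D * wnormSq σ u * wnormSq σ v)
    (u : (Fin d → ℤ) → ℝ≥0∞) :
    ∀ k, wnormSq σ (econvIter u k) ≤ (D * wnormSq σ u) ^ k
  | 0 => (wnormSq_econvIter_zero σ u).le.trans_eq (pow_zero _).symm
  | k + 1 => calc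
      wnormSq σ (econvIter u (k + 1)) ≤ D * wnormSq σ (econvIter u k) * wnormSq σ u := hD _ _
      _ ≤ D * (D * wnormSq σ u) ^ k * wnormSq σ u := by
          gcongr; exact wnormSq_econvIter_le hD u k
      _ = (D * wnormSq σ u) ^ (k + 1) := by ring

end WeightedNorm

section RealSequences

variable {d : ℕ}

theorem conv_nonneg {u v : (Fin d → ℤ) → ℝ} (hu : ∀ a, 0 ≤ u a) (hv : ∀ a, 0 ≤ v a)
    (a : Fin d → ℤ) : 0 ≤ conv u v a :=
  tsum_nonneg fun b => mul_nonneg (hu b) (hv _)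

theorem convIter_nonneg {f : (Fin d → ℤ) → ℝ} (hf : ∀ a, 0 ≤ f a) :
    ∀ k a, 0 ≤ convIter f k a
  | 0, a => by by_cases h : a = 0 <;> simp [convIter, h]
  | k + 1, a => conv_nonneg (convIter_nonneg hf k) hf a

/-- When the real series diverges, `conv` takes the junk value `0`, so only `≤` holds. -/
theorem ofReal_conv_le {u v : (Fin d → ℤ) → ℝ} (hu : ∀ a, 0 ≤ u a)
    (hv : ∀ a, 0 ≤ v a) :
    ENNReal.ofReal ∘ conv u v ≤ econv (ENNReal.ofReal ∘ u) (ENNReal.ofReal ∘ v) := fun _ =>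
  (ENNReal.ofReal_tsum_le fun b => mul_nonneg (hu b) (hv _)).trans_eq <|
    tsum_congr fun b => ENNReal.ofReal_mul (hu b)

theorem ofReal_convIter_le {f : (Fin d → ℤ) → ℝ} (hf : ∀ a, 0 ≤ f a) :
    ∀ k, ENNReal.ofReal ∘ convIter f k ≤ econvIter (ENNReal.ofReal ∘ f) k
  | 0 => fun a => by by_cases h : a = 0 <;> simp [convIter, econvIter, h]
  | k + 1 => (ofReal_conv_le (convIter_nonneg hf k) hf).trans
      (econv_mono (ofReal_convIter_le hf k) le_rfl)

theorem japPow_mul_ofReal_sq (σ : ℝ) (a : Fin d → ℤ) {x : ℝ} (hx : 0 ≤ x) :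
    (japPow σ a * ENNReal.ofReal x) ^ 2 = ENNReal.ofReal (jap a ^ (2 * σ) * x ^ 2) := by
  rw [japPow, ← ENNReal.ofReal_mul (by positivity [jap_pos a]), ← ENNReal.ofReal_pow
    (by positivity [jap_pos a]), mul_pow, ← Real.rpow_mul_natCast (jap_pos a).le, mul_comm σ]
  norm_num

theorem wnormSq_ofReal {σ : ℝ} {f : (Fin d → ℤ) → ℝ} (hf : ∀ a, 0 ≤ f a)
    (hsum : Summable fun a => jap a ^ (2 * σ) * f a ^ 2) :
    wnormSq σ (ENNReal.ofReal ∘ f) = ENNReal.ofReal (wnormR σ f ^ 2) := by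
  have hterm (a : Fin d → ℤ) : 0 ≤ jap a ^ (2 * σ) * f a ^ 2 := by positivity [jap_pos a]
  rw [wnormR, Real.sq_sqrt (tsum_nonneg hterm), ENNReal.ofReal_tsum_of_nonneg hterm hsum]
  exact tsum_congr fun a => japPow_mul_ofReal_sq σ a (hf a)

theorem lowFreq_tsum_le {s s₀ N B : ℝ} (hss₀ : s₀ ≤ s) (hN : 0 ≤ N)
    {F : (Fin d → ℤ) → ℝ} (hF : ∀ a, 0 ≤ F a)
    (hB : wnormSq s₀ (ENNReal.ofReal ∘ F) ≤ ENNReal.ofReal (B ^ 2)) :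
    ∑' ℓ, (if jap ℓ ≤ N then jap ℓ ^ (2 * s) * F ℓ ^ 2 else 0) ≤
      N ^ (2 * (s - s₀)) * B ^ 2 := by
  have hweight (ℓ : Fin d → ℤ) (hℓ : jap ℓ ≤ N) :
      jap ℓ ^ (2 * s) * F ℓ ^ 2 ≤ N ^ (2 * (s - s₀)) * (jap ℓ ^ (2 * s₀) * F ℓ ^ 2) :=
    calc jap ℓ ^ (2 * s) * F ℓ ^ 2
        = jap ℓ ^ (2 * (s - s₀)) * (jap ℓ ^ (2 * s₀) * F ℓ ^ 2) := by
          rw [← mul_assoc, ← Real.rpow_add (jap_pos ℓ)]; ring_nf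
      _ ≤ N ^ (2 * (s - s₀)) * (jap ℓ ^ (2 * s₀) * F ℓ ^ 2) := by
          gcongr
          · positivity [jap_pos ℓ]
          · exact (jap_pos ℓ).le
  rw [← ENNReal.ofReal_le_ofReal_iff (by positivity)]
  calc _ ≤ ∑' ℓ, ENNReal.ofReal
          (if jap ℓ ≤ N then jap ℓ ^ (2 * s) * F ℓ ^ 2 else 0) :=
        ENNReal.ofReal_tsum_le fun ℓ => by positivity [jap_pos ℓ]
    _ ≤ ∑' ℓ, ENNReal.ofReal (N ^ (2 * (s - s₀))) *
          (japPow s₀ ℓ * ENNReal.ofReal (F ℓ)) ^ 2 := by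
        refine ENNReal.tsum_le_tsum fun ℓ => ?_
        split_ifs with hℓ
        · rw [japPow_mul_ofReal_sq s₀ ℓ (hF ℓ), ← ENNReal.ofReal_mul (by positivity)]
          exact ENNReal.ofReal_le_ofReal (hweight ℓ hℓ)
        · simp
    _ ≤ ENNReal.ofReal (N ^ (2 * (s - s₀)) * B ^ 2) := by
        rw [ENNReal.tsum_mul_left, ENNReal.ofReal_mul (by positivity)]
        exact mul_le_mul' le_rfl hB

theorem wnormSq_conv_convIter_le {σ C : ℝ} (hCD : ∀ u v : (Fin d → ℤ) → ℝ≥0∞,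
      wnormSq σ (econv u v) ≤ ENNReal.ofReal (C ^ 2) * wnormSq σ u * wnormSq σ v)
    {f g : (Fin d → ℤ) → ℝ} (hf : ∀ a, 0 ≤ f a) (hg : ∀ a, 0 ≤ g a) {A B : ℝ}
    (hA : wnormSq σ (ENNReal.ofReal ∘ f) ≤ ENNReal.ofReal (A ^ 2))
    (hB : wnormSq σ (ENNReal.ofReal ∘ g) ≤ ENNReal.ofReal (B ^ 2)) (k n : ℕ) :
    wnormSq σ (ENNReal.ofReal ∘ conv (convIter f k) (convIter g n)) ≤
      ENNReal.ofReal ((C ^ (k + n + 1) * A ^ k * B ^ n) ^ 2) :=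
  calc wnormSq σ (ENNReal.ofReal ∘ conv (convIter f k) (convIter g n))
      ≤ wnormSq σ
          (econv (econvIter (ENNReal.ofReal ∘ f) k) (econvIter (ENNReal.ofReal ∘ g) n)) :=
        wnormSq_mono_right σ <|
          (ofReal_conv_le (convIter_nonneg hf k) (convIter_nonneg hg n)).trans
            (econv_mono (ofReal_convIter_le hf k) (ofReal_convIter_le hg n))
    _ ≤ ENNReal.ofReal (C ^ 2) * (ENNReal.ofReal (C ^ 2) * ENNReal.ofReal (A ^ 2)) ^ k *
          (ENNReal.ofReal (C ^ 2) * ENNReal.ofReal (B ^ 2)) ^ n :=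
        (hCD _ _).trans <| by
          gcongr
          exacts [(wnormSq_econvIter_le hCD _ k).trans (by gcongr),
            (wnormSq_econvIter_le hCD _ n).trans (by gcongr)]
    _ = ENNReal.ofReal ((C ^ (k + n + 1) * A ^ k * B ^ n) ^ 2) := by
        rw [← ENNReal.ofReal_mul (sq_nonneg C), ← ENNReal.ofReal_mul (sq_nonneg C),
          ← ENNReal.ofReal_pow (by positivity : 0 ≤ C ^ 2 * A ^ 2),
          ← ENNReal.ofReal_pow (by positivity : 0 ≤ C ^ 2 * B ^ 2),
          ← ENNReal.ofReal_mul (sq_nonneg C), ← ENNReal.ofReal_mul (by positivity)]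
        ring_nf

end RealSequences

theorem mixed_norm_low_output_estimate_general
    (d : ℕ) (s s₀ : ℝ) (hs₀ : (d : ℝ) / 2 < s₀) (hss₀ : s₀ ≤ s) :
    ∃ C : ℝ, 1 ≤ C ∧
      ∀ m n : ℕ, 3 ≤ m → 1 ≤ n → n ≤ m - 1 →
        ∀ N : ℝ, 1 ≤ N →
          ∀ f g : (Fin d → ℤ) → ℝ,
            (∀ a, 0 ≤ f a) → (∀ a, N < jap a → f a = 0) →
            (∀ a, 0 ≤ g a) → (∀ a, jap a ≤ N → g a = 0) →
            Summable (fun a => jap a ^ (2 * s) * (f a) ^ 2) →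
            Summable (fun a => jap a ^ (2 * s₀) * (g a) ^ 2) →
            Real.sqrt (∑' ℓ : Fin d → ℤ,
                if jap ℓ ≤ N then
                  jap ℓ ^ (2 * s) * (conv (convIter f (m - 1 - n)) (convIter g n) ℓ) ^ 2
                else 0)
              ≤ C ^ m * N ^ ((n : ℝ) * (s - s₀)) * wnormR s f ^ (m - 1 - n)
                  * wnormR s₀ g ^ n := by
  obtain ⟨C, hC, hCD⟩ := exists_wnormSq_econv_le hs₀
  refine ⟨C, hC, fun m n _ hn hnm N hN f g hf _ hg _ hfs hgs => ?_⟩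
  set k := m - 1 - n
  set W := C ^ m * wnormR s f ^ k * wnormR s₀ g ^ n
  have hW : 0 ≤ W := by unfold W wnormR; positivity
  have hF := wnormSq_conv_convIter_le hCD hf hg
    ((wnormSq_mono_left hss₀ _).trans_eq (wnormSq_ofReal hf hfs)) (wnormSq_ofReal hg hgs).le k n
  rw [show k + n + 1 = m by omega] at hF
  have hNpow : N ^ (2 * (s - s₀)) ≤ (N ^ ((n : ℝ) * (s - s₀))) ^ 2 := by
    rw [← Real.rpow_mul_natCast (by linarith)]
    have hn' : (1 : ℝ) ≤ n := Nat.one_le_cast.2 hn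
    exact Real.rpow_le_rpow_of_exponent_le hN (by push_cast; nlinarith)
  calc _ ≤ √(N ^ (2 * (s - s₀)) * W ^ 2) :=
        Real.sqrt_le_sqrt <| lowFreq_tsum_le hss₀ (by linarith)
          (conv_nonneg (convIter_nonneg hf k) (convIter_nonneg hg n)) hF
    _ ≤ √((N ^ ((n : ℝ) * (s - s₀))) ^ 2 * W ^ 2) := by gcongr
    _ = C ^ m * N ^ ((n : ℝ) * (s - s₀)) * wnormR s f ^ k * wnormR s₀ g ^ n := by
        rw [← mul_pow, Real.sqrt_sq (by positivity)]; ring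

theorem mixed_norm_low_output_estimate
    (d : ℕ) (hd : 1 ≤ d) (s s₀ : ℝ) (hs₀ : (d : ℝ) / 2 < s₀) (hss₀ : s₀ ≤ s) :
    ∃ C : ℝ, 1 ≤ C ∧
      ∀ m n : ℕ, 3 ≤ m → 1 ≤ n → n ≤ m - 1 →
        ∀ N : ℝ, 1 ≤ N →
          ∀ f g : (Fin d → ℤ) → ℝ,
            (∀ a, 0 ≤ f a) → (∀ a, N < jap a → f a = 0) →
            (∀ a, 0 ≤ g a) → (∀ a, jap a ≤ N → g a = 0) →
            Summable (fun a => jap a ^ (2 * s) * (f a) ^ 2) →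
            Summable (fun a => jap a ^ (2 * s₀) * (g a) ^ 2) →
            Real.sqrt (∑' ℓ : Fin d → ℤ,
                if jap ℓ ≤ N then
                  jap ℓ ^ (2 * s) * (conv (convIter f (m - 1 - n)) (convIter g n) ℓ) ^ 2
                else 0)
              ≤ C ^ m * N ^ ((n : ℝ) * (s - s₀)) * wnormR s f ^ (m - 1 - n)
                  * wnormR s₀ g ^ n :=
  mixed_norm_low_output_estimate_general d s s₀ hs₀ hss₀
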